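/- Let $1<p<q<\nu$, $0<\alpha<1$, let $A>0$, $B\ge0$, $S>0$, $L>0$, and define $\psi(t)=t^{p-\nu}A+t^{q-\nu}B-t^{-\nu-\alpha+1}S$ on $(0,\infty)$. If $\max_{t>0}\psi(t)>L$, then there exist exactly two points $t^1<t^2$ in $(0,\infty)$ with $\psi(t^1)=L=\psi(t^2)$, and moreover $\psi'(t^1)>0>\psi'(t^2)$. -/

import Mathlib

/-!
Factor `ψ' t = t ^ (-ν - α) * g t`, where `g` is strictly decreasing on `(0, ∞)` because the
exponents `p + α - 1`, `q + α - 1` are positive and the coefficients `p - ν`, `q - ν` negative.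
Hence the maximum point `m` of `ψ` is its only critical point, `ψ` increases on `(0, m]` and
decreases on `[m, ∞)`. Since `ψ < 0` near `0⁺` and `ψ → 0 < L` at `∞`, the intermediate value
theorem gives one solution of `ψ = L` on each side of `m`, and strict monotonicity gives no others.
-/

open Real Set Filter Topology

theorem exists_pair_eq_of_deriv_pos_of_deriv_neg {f : ℝ → ℝ} {a m s T L : ℝ}
    (hf : DifferentiableOn ℝ f (Ioi a)) (hpos : ∀ t ∈ Ioo a m, 0 < deriv f t)
    (hneg : ∀ t ∈ Ioi m, deriv f t < 0) (has : a < s) (hsm : s < m) (hmT : m < T)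
    (hs : f s < L) (hT : f T < L) (hm : L < f m) :
    ∃ t₁ t₂, a < t₁ ∧ t₁ < m ∧ m < t₂ ∧ f t₁ = L ∧ f t₂ = L ∧
      ∀ t, a < t → f t = L → t = t₁ ∨ t = t₂ := by
  have hcont : ContinuousOn f (Ioi a) := hf.continuousOn
  have hmono : StrictMonoOn f (Ioc a m) :=
    strictMonoOn_of_deriv_pos (convex_Ioc a m)
      (hcont.mono fun t ht => ht.1) (by rwa [interior_Ioc])
  have hanti : StrictAntiOn f (Ici m) :=
    strictAntiOn_of_deriv_neg (convex_Ici m)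
      (hcont.mono fun t ht => (has.trans hsm).trans_le ht) (by rwa [interior_Ici])
  obtain ⟨t₁, ⟨hst₁, ht₁m⟩, hft₁⟩ := intermediate_value_Ioo hsm.le
    (hcont.mono fun t ht => has.trans_le ht.1) ⟨hs, hm⟩
  obtain ⟨t₂, ⟨hmt₂, -⟩, hft₂⟩ := intermediate_value_Ioo' hmT.le
    (hcont.mono fun t ht => (has.trans hsm).trans_le ht.1) ⟨hT, hm⟩
  refine ⟨t₁, t₂, has.trans hst₁, ht₁m, hmt₂, hft₁, hft₂, fun t ht hft => ?_⟩
  rcases lt_trichotomy t m with htm | rfl | hmt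
  · exact .inl <| hmono.injOn ⟨ht, htm.le⟩ ⟨has.trans hst₁, ht₁m.le⟩ (hft.trans hft₁.symm)
  · exact absurd hft hm.ne'
  · exact .inr <| hanti.injOn hmt.le hmt₂.le (hft.trans hft₂.symm)

noncomputable def psi (p q ν α A B S t : ℝ) : ℝ :=
  t ^ (p - ν) * A + t ^ (q - ν) * B - t ^ (-ν - α + 1) * S

/-- `t ^ (ν + α) * ψ' t`. -/
noncomputable def psiDerivScaled (p q ν α A B S t : ℝ) : ℝ :=
  (p - ν) * t ^ (p + α - 1) * A + (q - ν) * t ^ (q + α - 1) * B + (ν + α - 1) * S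

section Psi

variable {p q ν α A B S t : ℝ}

theorem hasDerivAt_psi (ht : 0 < t) :
    HasDerivAt (psi p q ν α A B S) (t ^ (-ν - α) * psiDerivScaled p q ν α A B S t) t := by
  have hrpow (r : ℝ) : HasDerivAt (fun t : ℝ => t ^ r) (r * t ^ (r - 1)) t :=
    hasDerivAt_rpow_const (.inl ht.ne')
  have hsplit (r : ℝ) : t ^ (r - ν - 1) = t ^ (-ν - α) * t ^ (r + α - 1) := by
    rw [← rpow_add ht]; ring_nf
  refine ((((hrpow (p - ν)).mul_const A).add ((hrpow (q - ν)).mul_const B)).sub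
    ((hrpow (-ν - α + 1)).mul_const S)).congr_deriv ?_
  rw [psiDerivScaled, hsplit p, hsplit q, show -ν - α + 1 - 1 = -ν - α by ring]
  ring

theorem psi_eq_mul (ht : 0 < t) :
    psi p q ν α A B S t = t ^ (-ν - α + 1) * (t ^ (p + α - 1) * A + t ^ (q + α - 1) * B - S) := by
  have hsplit (r : ℝ) : t ^ (r - ν) = t ^ (-ν - α + 1) * t ^ (r + α - 1) := by
    rw [← rpow_add ht]; ring_nf
  rw [psi, hsplit p, hsplit q]
  ring

theorem strictAntiOn_psiDerivScaled (hpν : p < ν) (hqν : q ≤ ν) (hpα : 1 < p + α)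
    (hqα : 1 ≤ q + α) (hA : 0 < A) (hB : 0 ≤ B) :
    StrictAntiOn (psiDerivScaled p q ν α A B S) (Ioi 0) := by
  intro x hx y _ hxy
  have hP : (p - ν) * y ^ (p + α - 1) * A < (p - ν) * x ^ (p + α - 1) * A := by
    have := rpow_lt_rpow (le_of_lt hx) hxy (by linarith : 0 < p + α - 1)
    have := mul_lt_mul_of_neg_left this (mul_neg_of_neg_of_pos (sub_neg.mpr hpν) hA)
    linarith
  have hQ : (q - ν) * y ^ (q + α - 1) * B ≤ (q - ν) * x ^ (q + α - 1) * B := by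
    have := rpow_le_rpow (le_of_lt hx) hxy.le (by linarith : 0 ≤ q + α - 1)
    have := mul_le_mul_of_nonpos_left this
      (mul_nonpos_of_nonpos_of_nonneg (sub_nonpos.mpr hqν) hB)
    linarith
  simp only [psiDerivScaled]
  linarith

theorem deriv_psi_pos_and_neg_of_isLocalMax (hpν : p < ν) (hqν : q ≤ ν) (hpα : 1 < p + α)
    (hqα : 1 ≤ q + α) (hA : 0 < A) (hB : 0 ≤ B) {m : ℝ} (hm : 0 < m)
    (hmax : IsLocalMax (psi p q ν α A B S) m) :
    (∀ t ∈ Ioo 0 m, 0 < deriv (psi p q ν α A B S) t) ∧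
      ∀ t ∈ Ioi m, deriv (psi p q ν α A B S) t < 0 := by
  have hg := strictAntiOn_psiDerivScaled (S := S) hpν hqν hpα hqα hA hB
  have hgm : psiDerivScaled p q ν α A B S m = 0 := by
    have := (hasDerivAt_psi hm).deriv.symm.trans hmax.deriv_eq_zero
    exact (mul_eq_zero.mp this).resolve_left (rpow_pos_of_pos hm _).ne'
  refine ⟨fun t ⟨ht, htm⟩ => ?_, fun t (hmt : m < t) => ?_⟩
  · rw [(hasDerivAt_psi ht).deriv]
    exact mul_pos (rpow_pos_of_pos ht _) (hgm ▸ hg ht hm htm)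
  · have ht := hm.trans hmt
    rw [(hasDerivAt_psi ht).deriv]
    exact mul_neg_of_pos_of_neg (rpow_pos_of_pos ht _) (hgm ▸ hg hm ht hmt)

theorem eventually_psi_neg (hpα : 1 < p + α) (hqα : 1 < q + α) (hS : 0 < S) :
    ∀ᶠ t in 𝓝[>] 0, psi p q ν α A B S t < 0 := by
  have hcont : ContinuousAt (fun t : ℝ => t ^ (p + α - 1) * A + t ^ (q + α - 1) * B) 0 :=
    ((continuousAt_rpow_const 0 _ (.inr (by linarith))).mul continuousAt_const).add
      ((continuousAt_rpow_const 0 _ (.inr (by linarith))).mul continuousAt_const)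
  have hzero : (0 : ℝ) ^ (p + α - 1) * A + (0 : ℝ) ^ (q + α - 1) * B = 0 := by
    rw [zero_rpow (by linarith), zero_rpow (by linarith)]
    ring
  have hsmall : ∀ᶠ t in 𝓝 0, t ^ (p + α - 1) * A + t ^ (q + α - 1) * B < S :=
    hcont.eventually (gt_mem_nhds (by simp only [hzero, hS]))
  filter_upwards [nhdsWithin_le_nhds hsmall, self_mem_nhdsWithin] with t hlt (ht : 0 < t)
  rw [psi_eq_mul ht]
  exact mul_neg_of_pos_of_neg (rpow_pos_of_pos ht _) (by linarith)

theorem tendsto_psi_atTop (hpν : p < ν) (hqν : q < ν) (hνα : 1 < ν + α) :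
    Tendsto (psi p q ν α A B S) atTop (𝓝 0) := by
  have hdecay {r : ℝ} (hr : r < 0) : Tendsto (fun t : ℝ => t ^ r) atTop (𝓝 0) := by
    simpa using tendsto_rpow_neg_atTop (neg_pos.mpr hr)
  unfold psi
  simpa using (((hdecay (sub_neg.mpr hpν)).mul_const A).add
    ((hdecay (sub_neg.mpr hqν)).mul_const B)).sub
      ((hdecay (by linarith : -ν - α + 1 < 0)).mul_const S)

end Psi

theorem stmt_9_general (p q ν α A B S L : ℝ) (hp : 1 < p) (hpq : p < q) (hqν : q < ν)
    (hα0 : 0 < α) (hA : 0 < A) (hB : 0 ≤ B) (hS : 0 < S) (hL : 0 < L) :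
    let ψ : ℝ → ℝ := fun t =>
      t ^ (p - ν) * A + t ^ (q - ν) * B - t ^ (-ν - α + 1) * S
    (∃ tm : ℝ, 0 < tm ∧ (∀ t : ℝ, 0 < t → ψ t ≤ ψ tm) ∧ L < ψ tm) →
    ∃ t₁ t₂ : ℝ, 0 < t₁ ∧ t₁ < t₂ ∧ ψ t₁ = L ∧ ψ t₂ = L ∧
      0 < deriv ψ t₁ ∧ deriv ψ t₂ < 0 ∧
      ∀ t : ℝ, 0 < t → ψ t = L → t = t₁ ∨ t = t₂ := by
  intro ψ ⟨m, hm, hmax, hLm⟩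
  have hpν : p < ν := hpq.trans hqν
  obtain ⟨hpos, hneg⟩ : (∀ t ∈ Ioo 0 m, 0 < deriv ψ t) ∧ ∀ t ∈ Ioi m, deriv ψ t < 0 :=
    deriv_psi_pos_and_neg_of_isLocalMax hpν hqν.le (by linarith) (by linarith) hA hB hm
      (mem_of_superset (Ioi_mem_nhds hm) hmax)
  obtain ⟨s, hψs, hs, hsm⟩ : ∃ s, ψ s < 0 ∧ 0 < s ∧ s < m :=
    ((eventually_psi_neg (by linarith) (by linarith) hS).and (eventually_mem_nhdsWithin.and
      (eventually_nhdsWithin_of_eventually_nhds (eventually_lt_nhds hm)))).exists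
  obtain ⟨T, hψT, hmT⟩ : ∃ T, ψ T < L ∧ m < T :=
    (((tendsto_psi_atTop hpν hqν (by linarith)).eventually (eventually_lt_nhds hL)).and
      (eventually_gt_atTop m)).exists
  obtain ⟨t₁, t₂, ht₁, ht₁m, hmt₂, hψt₁, hψt₂, huniq⟩ :=
    exists_pair_eq_of_deriv_pos_of_deriv_neg
      (fun t ht => (hasDerivAt_psi ht).differentiableAt.differentiableWithinAt) hpos hneg hs hsm
      hmT (hψs.trans hL) hψT hLm
  exact ⟨t₁, t₂, ht₁, ht₁m.trans hmt₂, hψt₁, hψt₂, hpos t₁ ⟨ht₁, ht₁m⟩, hneg t₂ hmt₂, huniq⟩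

theorem stmt_9 (p q ν α A B S L : ℝ) (hp : 1 < p) (hpq : p < q) (hqν : q < ν)
    (hα0 : 0 < α) (hα1 : α < 1) (hA : 0 < A) (hB : 0 ≤ B) (hS : 0 < S) (hL : 0 < L) :
    let ψ : ℝ → ℝ := fun t =>
      t ^ (p - ν) * A + t ^ (q - ν) * B - t ^ (-ν - α + 1) * S
    (∃ tm : ℝ, 0 < tm ∧ (∀ t : ℝ, 0 < t → ψ t ≤ ψ tm) ∧ L < ψ tm) →
    ∃ t₁ t₂ : ℝ, 0 < t₁ ∧ t₁ < t₂ ∧ ψ t₁ = L ∧ ψ t₂ = L ∧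
      0 < deriv ψ t₁ ∧ deriv ψ t₂ < 0 ∧
      ∀ t : ℝ, 0 < t → ψ t = L → t = t₁ ∨ t = t₂ :=
  stmt_9_general p q ν α A B S L hp hpq hqν hα0 hA hB hS hL
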